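/- Fix m ≥ 0 and c ∈ ℝ. Suppose h₁ ≤ h₂ and B₁, B₂ ∈ ℝ satisfy ∫_{−∞}^{B_i} (x − c) Φ(m x + h_i) dμ₁(x) = 0 for i = 1, 2 (i.e. the x-coordinate of the μ₂-centroid of the region R₁(h_i, B_i) = {(x,y) : x ≤ B_i, y ≤ m x + h_i} equals c). Then B₁ ≤ B₂. -/

import Mathlib

open Real MeasureTheory Set

/-- The standard Gaussian measure on `ℝ`, with density `(2π)^{-1/2} exp(−x²/2)`
with respect to Lebesgue measure. -/
noncomputable def stdGaussian1 : Measure ℝ :=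
  volume.withDensity fun x =>
    ENNReal.ofReal ((Real.sqrt (2 * Real.pi))⁻¹ * Real.exp (-x ^ 2 / 2))

/-- The standard normal cumulative distribution function
`Φ(x) = (2π)^{-1/2} ∫_{−∞}^x exp(−t²/2) dt`. -/
noncomputable def stdNormalCDF (x : ℝ) : ℝ :=
  (Real.sqrt (2 * Real.pi))⁻¹ * ∫ t in Set.Iic x, Real.exp (-t ^ 2 / 2)

private lemma sqrt2pi_pos : 0 < Real.sqrt (2 * Real.pi) :=
  Real.sqrt_pos.mpr (by positivity)

private lemma gauss_integrable : Integrable (fun t : ℝ => Real.exp (-t ^ 2 / 2)) := by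
  have e : (fun t : ℝ => Real.exp (-t ^ 2 / 2)) = fun t : ℝ => Real.exp (-(1/2) * t ^ 2) := by
    funext t; congr 1; ring
  rw [e]
  exact integrable_exp_neg_mul_sq (by norm_num)

private lemma t_gauss_integrable : Integrable (fun t : ℝ => t * Real.exp (-t ^ 2 / 2)) := by
  have e : (fun t : ℝ => t * Real.exp (-t ^ 2 / 2))
      = fun t : ℝ => t * Real.exp (-(1/2) * t ^ 2) := by
    funext t; congr 2; ring
  rw [e]
  exact integrable_mul_exp_neg_mul_sq (by norm_num)

private lemma cdf_nonneg (x : ℝ) : 0 ≤ stdNormalCDF x := by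
  apply mul_nonneg (inv_nonneg.mpr sqrt2pi_pos.le)
  exact setIntegral_nonneg measurableSet_Iic fun t _ => (Real.exp_pos _).le

private lemma cdf_pos (x : ℝ) : 0 < stdNormalCDF x := by
  apply mul_pos (inv_pos.mpr sqrt2pi_pos)
  rw [setIntegral_pos_iff_support_of_nonneg_ae
    (Filter.Eventually.of_forall fun t => (Real.exp_pos _).le) gauss_integrable.integrableOn]
  have : Function.support (fun t : ℝ => Real.exp (-t ^ 2 / 2)) = Set.univ :=
    Set.eq_univ_of_forall fun t => (Real.exp_pos _).ne'
  rw [this, Set.univ_inter]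
  simp

private lemma gauss_total : ∫ t : ℝ, Real.exp (-t ^ 2 / 2) = Real.sqrt (2 * Real.pi) := by
  have e : (fun t : ℝ => Real.exp (-t ^ 2 / 2)) = fun t : ℝ => Real.exp (-(1/2) * t ^ 2) := by
    funext t; congr 1; ring
  rw [e, integral_gaussian]
  congr 1; ring

private lemma cdf_le_one (x : ℝ) : stdNormalCDF x ≤ 1 := by
  unfold stdNormalCDF
  rw [← inv_mul_cancel₀ sqrt2pi_pos.ne']
  apply mul_le_mul_of_nonneg_left _ (inv_nonneg.mpr sqrt2pi_pos.le)
  rw [← gauss_total]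
  exact setIntegral_le_integral gauss_integrable
    (Filter.Eventually.of_forall fun t => (Real.exp_pos _).le)

private lemma cdf_mono : Monotone stdNormalCDF := by
  intro a b hab
  apply mul_le_mul_of_nonneg_left _ (inv_nonneg.mpr sqrt2pi_pos.le)
  exact setIntegral_mono_set gauss_integrable.integrableOn
    (Filter.Eventually.of_forall fun t => (Real.exp_pos _).le)
    (HasSubset.Subset.eventuallyLE (Iic_subset_Iic.mpr hab))

private lemma cdf_measurable : Measurable stdNormalCDF := cdf_mono.measurable

private lemma gauss_hasDeriv (t : ℝ) :
    HasDerivAt (fun u : ℝ => Real.exp (-u ^ 2 / 2)) (-t * Real.exp (-t ^ 2 / 2)) t := by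
  have h1 : HasDerivAt (fun u : ℝ => -u ^ 2 / 2) (-t) t := by
    have := ((hasDerivAt_pow 2 t).neg).div_const 2
    simpa using this.congr_deriv (by ring)
  simpa [mul_comm] using h1.exp

private lemma ftc_Iic (a : ℝ) :
    ∫ t in Set.Iic a, -t * Real.exp (-t ^ 2 / 2) = Real.exp (-a ^ 2 / 2) := by
  have h := integral_Iic_of_hasDerivAt_of_tendsto' (a := a) (m := 0)
    (f := fun u : ℝ => Real.exp (-u ^ 2 / 2))
    (f' := fun t : ℝ => -t * Real.exp (-t ^ 2 / 2))
    (fun t _ => gauss_hasDeriv t)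
    ((t_gauss_integrable.neg.congr
      (Filter.Eventually.of_forall fun t => by simp)).integrableOn)
    ?_
  · simpa using h
  · have h0 : Filter.Tendsto (fun u : ℝ => (-u) * (-u)) Filter.atBot Filter.atTop :=
      Filter.tendsto_neg_atBot_atTop.atTop_mul_atTop₀ Filter.tendsto_neg_atBot_atTop
    have h1 : Filter.Tendsto (fun u : ℝ => -u ^ 2 / 2) Filter.atBot Filter.atBot := by
      have h2 := (Filter.tendsto_neg_atTop_atBot.comp h0).atBot_div_const
        (by norm_num : (0:ℝ) < 2)
      exact h2.congr (fun u => by simp [Function.comp]; ring)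
    exact Real.tendsto_exp_atBot.comp h1

private lemma neg_t_gauss_integrable :
    Integrable (fun t : ℝ => -t * Real.exp (-t ^ 2 / 2)) :=
  t_gauss_integrable.neg.congr (Filter.Eventually.of_forall fun t => by simp)

private lemma mill (a : ℝ) :
    stdNormalCDF a * (-a) ≤ (Real.sqrt (2 * Real.pi))⁻¹ * Real.exp (-a ^ 2 / 2) := by
  unfold stdNormalCDF
  rw [mul_assoc]
  apply mul_le_mul_of_nonneg_left _ (inv_nonneg.mpr sqrt2pi_pos.le)
  rw [← ftc_Iic a, ← integral_mul_const]
  apply setIntegral_mono_on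
  · exact (gauss_integrable.mul_const _).integrableOn
  · exact neg_t_gauss_integrable.integrableOn
  · exact measurableSet_Iic
  · intro t ht
    have ht' : t ≤ a := ht
    nlinarith [Real.exp_pos (-t ^ 2 / 2)]

private lemma ratio_key {a b : ℝ} (hab : a ≤ b) :
    Real.exp (-b ^ 2 / 2) * stdNormalCDF a ≤ Real.exp (-a ^ 2 / 2) * stdNormalCDF b := by
  rcases le_or_gt (Real.exp (-b ^ 2 / 2)) (Real.exp (-a ^ 2 / 2)) with h | h
  · calc Real.exp (-b ^ 2 / 2) * stdNormalCDF a
        ≤ Real.exp (-a ^ 2 / 2) * stdNormalCDF a :=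
          mul_le_mul_of_nonneg_right h (cdf_nonneg a)
      _ ≤ Real.exp (-a ^ 2 / 2) * stdNormalCDF b :=
          mul_le_mul_of_nonneg_left (cdf_mono hab) (Real.exp_pos _).le
  · have ha : a < 0 := by
      by_contra h0
      push_neg at h0
      have : a ^ 2 ≤ b ^ 2 := by nlinarith
      have : Real.exp (-b ^ 2 / 2) ≤ Real.exp (-a ^ 2 / 2) :=
        Real.exp_le_exp.mpr (by linarith)
      linarith
    have hD : stdNormalCDF b - stdNormalCDF a
        = (Real.sqrt (2 * Real.pi))⁻¹ * ∫ t in a..b, Real.exp (-t ^ 2 / 2) := by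
      unfold stdNormalCDF
      rw [← mul_sub, intervalIntegral.integral_Iic_sub_Iic
        gauss_integrable.integrableOn gauss_integrable.integrableOn]
    have hDnn : 0 ≤ ∫ t in a..b, Real.exp (-t ^ 2 / 2) :=
      intervalIntegral.integral_nonneg hab fun t _ => (Real.exp_pos _).le
    have hde : Real.exp (-b ^ 2 / 2) - Real.exp (-a ^ 2 / 2)
        = ∫ t in a..b, -t * Real.exp (-t ^ 2 / 2) := by
      rw [← ftc_Iic a, ← ftc_Iic b, intervalIntegral.integral_Iic_sub_Iic
        neg_t_gauss_integrable.integrableOn neg_t_gauss_integrable.integrableOn]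
    have hcmp : (∫ t in a..b, -t * Real.exp (-t ^ 2 / 2))
        ≤ (-a) * ∫ t in a..b, Real.exp (-t ^ 2 / 2) := by
      rw [← intervalIntegral.integral_const_mul]
      apply intervalIntegral.integral_mono_on hab
        neg_t_gauss_integrable.intervalIntegrable
        ((gauss_integrable.const_mul _).intervalIntegrable)
      intro t ht
      have ht' : a ≤ t := ht.1
      nlinarith [Real.exp_pos (-t ^ 2 / 2)]
    have hmill := mill a
    set D := ∫ t in a..b, Real.exp (-t ^ 2 / 2) with hDdef
    have h1 : D * (stdNormalCDF a * (-a))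
        ≤ D * ((Real.sqrt (2 * Real.pi))⁻¹ * Real.exp (-a ^ 2 / 2)) :=
      mul_le_mul_of_nonneg_left hmill hDnn
    have h2 : (Real.exp (-b ^ 2 / 2) - Real.exp (-a ^ 2 / 2)) * stdNormalCDF a
        ≤ ((-a) * D) * stdNormalCDF a := by
      apply mul_le_mul_of_nonneg_right _ (cdf_nonneg a)
      rw [hde]; exact hcmp
    have h3 : Real.exp (-a ^ 2 / 2) * (stdNormalCDF b - stdNormalCDF a)
        = Real.exp (-a ^ 2 / 2) * ((Real.sqrt (2 * Real.pi))⁻¹ * D) := by rw [hD]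
    nlinarith [h1, h2, h3]

private lemma shift_exp_mul {a b u : ℝ} (hab : a ≤ b) (hu : 0 ≤ u) :
    stdNormalCDF a * Real.exp (-(b + u) ^ 2 / 2)
      ≤ stdNormalCDF b * Real.exp (-(a + u) ^ 2 / 2) := by
  have h1 : Real.exp (-(b + u) ^ 2 / 2) * Real.exp (-a ^ 2 / 2)
      ≤ Real.exp (-b ^ 2 / 2) * Real.exp (-(a + u) ^ 2 / 2) := by
    rw [← Real.exp_add, ← Real.exp_add]
    exact Real.exp_le_exp.mpr (by nlinarith)
  have h2 := ratio_key hab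
  have h1' := mul_le_mul_of_nonneg_left h1 (cdf_nonneg a)
  have h2' := mul_le_mul_of_nonneg_right h2 (Real.exp_pos (-(a + u) ^ 2 / 2)).le
  have h3 : stdNormalCDF a * Real.exp (-(b + u) ^ 2 / 2) * Real.exp (-a ^ 2 / 2)
      ≤ stdNormalCDF b * Real.exp (-(a + u) ^ 2 / 2) * Real.exp (-a ^ 2 / 2) := by
    nlinarith [h1', h2']
  exact le_of_mul_le_mul_right h3 (Real.exp_pos _)

private lemma cdf_ratio_antitone {a b δ : ℝ} (hab : a ≤ b) (hδ : 0 ≤ δ) :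
    stdNormalCDF (b + δ) * stdNormalCDF a ≤ stdNormalCDF (a + δ) * stdNormalCDF b := by
  have key : ∀ x : ℝ, stdNormalCDF (x + δ) - stdNormalCDF x
      = (Real.sqrt (2 * Real.pi))⁻¹ * ∫ u in (0:ℝ)..δ, Real.exp (-(x + u) ^ 2 / 2) := by
    intro x
    unfold stdNormalCDF
    rw [← mul_sub, intervalIntegral.integral_Iic_sub_Iic gauss_integrable.integrableOn
      gauss_integrable.integrableOn]
    congr 1
    have h := intervalIntegral.integral_comp_add_left (a := (0:ℝ)) (b := δ)
      (fun t : ℝ => Real.exp (-t ^ 2 / 2)) x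
    simpa using h.symm
  have hint : ∀ x : ℝ, IntervalIntegrable
      (fun u : ℝ => Real.exp (-(x + u) ^ 2 / 2)) volume 0 δ :=
    fun x => (Continuous.intervalIntegrable (by continuity) _ _)
  set S := (Real.sqrt (2 * Real.pi))⁻¹ with hS
  set Ia := ∫ u in (0:ℝ)..δ, Real.exp (-(a + u) ^ 2 / 2) with hIa
  set Ib := ∫ u in (0:ℝ)..δ, Real.exp (-(b + u) ^ 2 / 2) with hIb
  have hsub : stdNormalCDF b * Ia - stdNormalCDF a * Ib
      = ∫ u in (0:ℝ)..δ, (stdNormalCDF b * Real.exp (-(a + u) ^ 2 / 2)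
          - stdNormalCDF a * Real.exp (-(b + u) ^ 2 / 2)) := by
    rw [intervalIntegral.integral_sub ((hint a).const_mul _) ((hint b).const_mul _),
      intervalIntegral.integral_const_mul, intervalIntegral.integral_const_mul]
  have hnn : 0 ≤ ∫ u in (0:ℝ)..δ, (stdNormalCDF b * Real.exp (-(a + u) ^ 2 / 2)
      - stdNormalCDF a * Real.exp (-(b + u) ^ 2 / 2)) :=
    intervalIntegral.integral_nonneg hδ fun u hu =>
      sub_nonneg.mpr (shift_exp_mul hab hu.1)
  have h4 : 0 ≤ S * (stdNormalCDF b * Ia - stdNormalCDF a * Ib) :=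
    mul_nonneg (inv_nonneg.mpr sqrt2pi_pos.le) (by linarith [hsub, hnn])
  have ea : stdNormalCDF (a + δ) = stdNormalCDF a + S * Ia := by linarith [key a]
  have eb : stdNormalCDF (b + δ) = stdNormalCDF b + S * Ib := by linarith [key b]
  rw [ea, eb]
  nlinarith [h4]

private lemma density_meas : Measurable fun x : ℝ =>
    ENNReal.ofReal ((Real.sqrt (2 * Real.pi))⁻¹ * Real.exp (-x ^ 2 / 2)) := by
  apply ENNReal.measurable_ofReal.comp
  exact (continuous_const.mul (Real.continuous_exp.comp (by continuity))).measurable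

private lemma integrable_main (m c h : ℝ) :
    Integrable (fun x => (x - c) * stdNormalCDF (m * x + h)) stdGaussian1 := by
  unfold stdGaussian1
  rw [integrable_withDensity_iff density_meas
    (Filter.Eventually.of_forall fun x => ENNReal.ofReal_lt_top)]
  have hbound : Integrable (fun x : ℝ =>
      (|x| + |c|) * ((Real.sqrt (2 * Real.pi))⁻¹ * Real.exp (-x ^ 2 / 2))) := by
    have h1 : Integrable (fun x : ℝ => |x| * Real.exp (-x ^ 2 / 2)) := by
      apply t_gauss_integrable.abs.congr
      exact Filter.Eventually.of_forall fun x => by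
        simp only [abs_mul, abs_of_pos (Real.exp_pos _)]
    have h2 : Integrable (fun x : ℝ => |c| * Real.exp (-x ^ 2 / 2)) :=
      gauss_integrable.const_mul _
    exact ((h1.add h2).const_mul ((Real.sqrt (2 * Real.pi))⁻¹)).congr
      (Filter.Eventually.of_forall fun x => by simp [Pi.add_apply]; ring)
  apply hbound.mono'
  · apply Measurable.aestronglyMeasurable
    apply Measurable.mul
    · exact (measurable_id.sub_const c).mul
        (cdf_measurable.comp ((measurable_id.const_mul m).add_const h))
    · exact ENNReal.measurable_toReal.comp density_meas
  · apply Filter.Eventually.of_forall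
    intro x
    have hd : (ENNReal.ofReal ((Real.sqrt (2 * Real.pi))⁻¹
        * Real.exp (-x ^ 2 / 2))).toReal
        = (Real.sqrt (2 * Real.pi))⁻¹ * Real.exp (-x ^ 2 / 2) :=
      ENNReal.toReal_ofReal (by positivity)
    rw [Real.norm_eq_abs, abs_mul, abs_mul, hd,
      abs_of_nonneg (by positivity : (0:ℝ) ≤ (Real.sqrt (2 * Real.pi))⁻¹ * Real.exp (-x ^ 2 / 2))]
    apply mul_le_mul_of_nonneg_right _ (by positivity)
    calc |x - c| * |stdNormalCDF (m * x + h)| ≤ |x - c| * 1 := by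
          apply mul_le_mul_of_nonneg_left _ (abs_nonneg _)
          rw [abs_of_nonneg (cdf_nonneg _)]
          exact cdf_le_one _
      _ ≤ |x| + |c| := by rw [mul_one]; exact abs_sub _ _

private lemma gauss_meas_ne_zero {s : Set ℝ} (hs : MeasurableSet s)
    (hv : volume s ≠ 0) : stdGaussian1 s ≠ 0 := by
  intro h0
  unfold stdGaussian1 at h0
  rw [withDensity_apply _ hs] at h0
  rw [lintegral_eq_zero_iff density_meas] at h0
  have : volume.restrict s {x : ℝ | ¬ (ENNReal.ofReal
      ((Real.sqrt (2 * Real.pi))⁻¹ * Real.exp (-x ^ 2 / 2)) = 0)} = 0 := h0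
  have huniv : volume.restrict s (Set.univ : Set ℝ) = 0 := by
    apply measure_mono_null _ this
    intro x _
    simp only [Set.mem_setOf_eq]
    exact (ENNReal.ofReal_pos.mpr (by positivity)).ne'
  rw [Measure.restrict_apply_univ] at huniv
  exact hv huniv

private lemma pointwise_key {m c h₁ h₂ : ℝ} (hm : 0 ≤ m) (hh : h₁ ≤ h₂) (x : ℝ) :
    (x - c) * stdNormalCDF (m * x + h₂)
      ≤ (stdNormalCDF (m * c + h₂) / stdNormalCDF (m * c + h₁))
        * ((x - c) * stdNormalCDF (m * x + h₁)) := by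
  set K := stdNormalCDF (m * c + h₂) / stdNormalCDF (m * c + h₁) with hK
  have hcpos := cdf_pos (m * c + h₁)
  rcases le_total x c with hxc | hxc
  · have hra := cdf_ratio_antitone (a := m * x + h₁) (b := m * c + h₁) (δ := h₂ - h₁)
      (by nlinarith) (by linarith)
    have harg : m * x + h₁ + (h₂ - h₁) = m * x + h₂ := by ring
    have harg2 : m * c + h₁ + (h₂ - h₁) = m * c + h₂ := by ring
    rw [harg, harg2] at hra
    have hKle : K * stdNormalCDF (m * x + h₁) ≤ stdNormalCDF (m * x + h₂) := by
      rw [hK, div_mul_eq_mul_div, div_le_iff₀ hcpos]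
      linarith [hra]
    have := mul_le_mul_of_nonpos_left hKle (sub_nonpos.mpr hxc)
    exact this.trans_eq (by ring)
  · have hra := cdf_ratio_antitone (a := m * c + h₁) (b := m * x + h₁) (δ := h₂ - h₁)
      (by nlinarith) (by linarith)
    have harg : m * x + h₁ + (h₂ - h₁) = m * x + h₂ := by ring
    have harg2 : m * c + h₁ + (h₂ - h₁) = m * c + h₂ := by ring
    rw [harg, harg2] at hra
    have hKle : stdNormalCDF (m * x + h₂) ≤ K * stdNormalCDF (m * x + h₁) := by
      rw [hK, div_mul_eq_mul_div, le_div_iff₀ hcpos]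
      linarith [hra]
    have := mul_le_mul_of_nonneg_left hKle (sub_nonneg.mpr hxc)
    exact this.trans_eq (by ring)

private lemma root_gt {m c h B : ℝ}
    (hB : ∫ x in Set.Iic B, (x - c) * stdNormalCDF (m * x + h) ∂stdGaussian1 = 0) :
    c < B := by
  by_contra hcB
  push_neg at hcB
  have hae : 0 ≤ᵐ[stdGaussian1.restrict (Set.Iic B)]
      fun x => -((x - c) * stdNormalCDF (m * x + h)) := by
    filter_upwards [ae_restrict_mem measurableSet_Iic] with x hx
    have hxc : x ≤ c := le_trans hx hcB
    simp only [Pi.zero_apply]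
    nlinarith [mul_nonneg (sub_nonneg.mpr hxc : (0:ℝ) ≤ c - x) (cdf_nonneg (m * x + h))]
  have hzero : (fun x => -((x - c) * stdNormalCDF (m * x + h)))
      =ᵐ[stdGaussian1.restrict (Set.Iic B)] 0 := by
    rw [← integral_eq_zero_iff_of_nonneg_ae hae ((integrable_main m c h).restrict).neg]
    rw [integral_neg, hB, neg_zero]
  rw [Filter.EventuallyEq, ae_iff] at hzero
  have hsub : Set.Iio B ⊆ {x | ¬ (fun x => -((x - c) * stdNormalCDF (m * x + h))) x
      = (0 : ℝ → ℝ) x} := by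
    intro x hx
    have hx' : x < B := hx
    have hneg : (x - c) * stdNormalCDF (m * x + h) < 0 :=
      mul_neg_of_neg_of_pos (by linarith [lt_of_lt_of_le hx' hcB]) (cdf_pos _)
    simp only [Set.mem_setOf_eq, Pi.zero_apply]
    intro habs
    nlinarith
  have h0 : stdGaussian1.restrict (Set.Iic B) (Set.Iio B) = 0 :=
    measure_mono_null hsub hzero
  rw [Measure.restrict_apply measurableSet_Iio,
    Set.inter_eq_left.mpr Set.Iio_subset_Iic_self] at h0
  exact gauss_meas_ne_zero measurableSet_Iio (by simp [Real.volume_Iio]) h0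


/-- Lemma 8 (case of `R₁`): for fixed `m ≥ 0` and `c`, if `B₁`, `B₂` satisfy the centroid
conditions `∫_{−∞}^{B_i} (x − c) Φ(m x + h_i) dμ₁(x) = 0` with `h₁ ≤ h₂`, then `B₁ ≤ B₂`. -/
theorem centroid_B_monotone_in_h
    (m c : ℝ) (hm : 0 ≤ m) (h₁ h₂ B₁ B₂ : ℝ) (hh : h₁ ≤ h₂)
    (hB₁ : ∫ x in Set.Iic B₁, (x - c) * stdNormalCDF (m * x + h₁) ∂stdGaussian1 = 0)
    (hB₂ : ∫ x in Set.Iic B₂, (x - c) * stdNormalCDF (m * x + h₂) ∂stdGaussian1 = 0) :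
    B₁ ≤ B₂ := by
  by_contra hBB
  push_neg at hBB
  have hcB₂ : c < B₂ := root_gt hB₂
  set K := stdNormalCDF (m * c + h₂) / stdNormalCDF (m * c + h₁) with hK
  have int1 := integrable_main m c h₁
  have int2 := integrable_main m c h₂
  -- Step II : ∫_{Iic B₁} (x-c)Φ(mx+h₂) ≤ 0
  have hle : (∫ x in Set.Iic B₁, (x - c) * stdNormalCDF (m * x + h₂) ∂stdGaussian1) ≤ 0 := by
    have hmono : (∫ x in Set.Iic B₁, (x - c) * stdNormalCDF (m * x + h₂) ∂stdGaussian1)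
        ≤ ∫ x in Set.Iic B₁, K * ((x - c) * stdNormalCDF (m * x + h₁)) ∂stdGaussian1 :=
      setIntegral_mono int2.integrableOn (int1.const_mul K).integrableOn
        (pointwise_key hm hh)
    rw [integral_const_mul, hB₁, mul_zero] at hmono
    exact hmono
  -- Step III : split the integral
  have hsplit : (∫ x in Set.Iic B₁, (x - c) * stdNormalCDF (m * x + h₂) ∂stdGaussian1)
      = (∫ x in Set.Iic B₂, (x - c) * stdNormalCDF (m * x + h₂) ∂stdGaussian1)
        + ∫ x in Set.Ioc B₂ B₁, (x - c) * stdNormalCDF (m * x + h₂) ∂stdGaussian1 := by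
    rw [← setIntegral_union (Set.Iic_disjoint_Ioc le_rfl) measurableSet_Ioc
      int2.integrableOn int2.integrableOn, Set.Iic_union_Ioc_eq_Iic hBB.le]
  rw [hsplit, hB₂, zero_add] at hle
  have hnn : 0 ≤ ∫ x in Set.Ioc B₂ B₁, (x - c) * stdNormalCDF (m * x + h₂) ∂stdGaussian1 :=
    setIntegral_nonneg measurableSet_Ioc fun x hx =>
      mul_nonneg (by linarith [hx.1, hcB₂]) (cdf_nonneg _)
  have heq : (∫ x in Set.Ioc B₂ B₁, (x - c) * stdNormalCDF (m * x + h₂) ∂stdGaussian1) = 0 :=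
    le_antisymm hle hnn
  have hae : 0 ≤ᵐ[stdGaussian1.restrict (Set.Ioc B₂ B₁)]
      fun x => (x - c) * stdNormalCDF (m * x + h₂) := by
    filter_upwards [ae_restrict_mem measurableSet_Ioc] with x hx
    exact mul_nonneg (by linarith [hx.1, hcB₂]) (cdf_nonneg _)
  have hzero : (fun x => (x - c) * stdNormalCDF (m * x + h₂))
      =ᵐ[stdGaussian1.restrict (Set.Ioc B₂ B₁)] 0 := by
    rw [← integral_eq_zero_iff_of_nonneg_ae hae int2.restrict]
    exact heq
  rw [Filter.EventuallyEq, ae_iff] at hzero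
  have hsub : Set.Ioc B₂ B₁ ⊆ {x | ¬ (fun x => (x - c) * stdNormalCDF (m * x + h₂)) x
      = (0 : ℝ → ℝ) x} := by
    intro x hx
    have hpos : 0 < (x - c) * stdNormalCDF (m * x + h₂) :=
      mul_pos (by linarith [hx.1, hcB₂]) (cdf_pos _)
    simp only [Set.mem_setOf_eq, Pi.zero_apply]
    intro habs
    nlinarith
  have h0 : stdGaussian1.restrict (Set.Ioc B₂ B₁) (Set.Ioc B₂ B₁) = 0 :=
    measure_mono_null hsub hzero
  rw [Measure.restrict_apply measurableSet_Ioc, Set.inter_self] at h0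
  refine gauss_meas_ne_zero measurableSet_Ioc ?_ h0
  rw [Real.volume_Ioc]
  simp only [ne_eq, ENNReal.ofReal_eq_zero, not_le]
  linarith
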